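/- Let μ ≠ 0, ε = ±1, and let g be the metric on ℝ³ with matrix g₁₁ = (ε/μ)(e^{−2μx₃} − 1), g₁₂ = 1, g₁₃ = μx₂, g₃₃ = 1, other independent entries zero. Then the Christoffel symbols of g, defined by Γ^k_{ij} = ½ g^{kl}(∂ᵢg_{jl} + ∂ⱼg_{il} − ∂ₗg_{ij}), are exactly those determined by: ∇_{∂₁}∂₁ = −εμx₂e^{−2μx₃}∂₂ + εe^{−2μx₃}∂₃; ∇_{∂₁}∂₂ = −½μ²x₂∂₂ + ½μ∂₃; ∇_{∂₁}∂₃ = −½μ∂₁ − ½(εe^{−2μx₃} + ε + μ³x₂²)∂₂ + ½μ²x₂∂₃; ∇_{∂₂}∂₃ = ½μ∂₂; and ∇_{∂₂}∂₂ = ∇_{∂₃}∂₃ = 0. -/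

import Mathlib

/-- A point of `ℝ³`. -/
abbrev Pt := Fin 3 → ℝ

/-- Partial derivative `∂ᵢ f` of a scalar function on `ℝ³`. -/
noncomputable def pder (i : Fin 3) (f : Pt → ℝ) (p : Pt) : ℝ :=
  fderiv ℝ f p (Pi.single i 1)

/-- The matrix of the metric `g` at a point `p = (x₁,x₂,x₃)`. -/
noncomputable def gMat (μ ε : ℝ) (p : Pt) : Matrix (Fin 3) (Fin 3) ℝ :=
  ![![(ε/μ) * (Real.exp (-(2*μ*p 2)) - 1), 1, μ * p 1],
    ![1, 0, 0],
    ![μ * p 1, 0, 1]]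

/-- The Christoffel symbols `Γ^k_{ij} = ½ g^{kl}(∂ᵢg_{jl} + ∂ⱼg_{il} − ∂ₗg_{ij})`,
where `(g^{kl})` is the inverse matrix of `(g_{kl})`. -/
noncomputable def Γ (μ ε : ℝ) (k i j : Fin 3) (p : Pt) : ℝ :=
  (1/2) * ∑ l : Fin 3, (gMat μ ε p)⁻¹ k l *
    (pder i (fun q => gMat μ ε q j l) p + pder j (fun q => gMat μ ε q i l) p
      - pder l (fun q => gMat μ ε q i j) p)

/-- The explicit values of the Christoffel symbols (index order `k i j`). -/
noncomputable def Γexp (μ ε : ℝ) (p : Pt) : Fin 3 → Fin 3 → Fin 3 → ℝ :=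
  ![![![0, 0, -(μ/2)],
     ![0, 0, 0],
     ![-(μ/2), 0, 0]],
    ![![-(ε * μ * p 1 * Real.exp (-(2*μ*p 2))), -(μ^2 * p 1 / 2),
        -((ε * Real.exp (-(2*μ*p 2)) + ε + μ^3 * (p 1)^2) / 2)],
     ![-(μ^2 * p 1 / 2), 0, μ/2],
     ![-((ε * Real.exp (-(2*μ*p 2)) + ε + μ^3 * (p 1)^2) / 2), μ/2, 0]],
    ![![ε * Real.exp (-(2*μ*p 2)), μ/2, μ^2 * p 1 / 2],
     ![μ/2, 0, 0],
     ![μ^2 * p 1 / 2, 0, 0]]]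

/-!
Every coefficient of `g` is a function of a single coordinate (`g₁₁` of `x₃`, `g₁₃` of `x₂`, the
others constant), so each `∂ₗ g_{ij}` is a one-variable derivative, and `g` has determinant `-1`
with an explicit polynomial inverse. Substituting both into the defining formula of `Γ` leaves 27 identities
between explicit expressions, each closed by field arithmetic.
-/

open Real

lemma pder_comp_apply {f : ℝ → ℝ} {f' : ℝ} {i j : Fin 3} {p : Pt} (hf : HasDerivAt f f' (p j)) :
    pder i (fun q => f (q j)) p = if i = j then f' else 0 := by
  have h : HasFDerivAt (fun q : Pt => f (q j)) (f' • (ContinuousLinearMap.proj j : Pt →L[ℝ] ℝ)) p :=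
    hf.comp_hasFDerivAt p (hasFDerivAt_apply j p)
  rw [pder, h.fderiv]
  by_cases hij : i = j <;> simp [hij, eq_comm]

lemma hasDerivAt_div_mul_exp_sub_one {μ : ℝ} (hμ : μ ≠ 0) (ε t : ℝ) :
    HasDerivAt (fun t => (ε/μ) * (exp (-(2*μ*t)) - 1)) (-(2 * ε * exp (-(2*μ*t)))) t := by
  have h : HasDerivAt (fun t => -(2*μ*t)) (-(2*μ)) t := by
    simpa using ((hasDerivAt_id' t).const_mul (2*μ)).fun_neg
  refine ((h.exp.sub_const 1).const_mul (ε/μ)).congr_deriv ?_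
  field_simp

noncomputable def gMatPartial (μ ε : ℝ) (l : Fin 3) (p : Pt) : Matrix (Fin 3) (Fin 3) ℝ :=
  ![![if l = 2 then -(2 * ε * exp (-(2*μ*p 2))) else 0, 0, if l = 1 then μ else 0],
    ![0, 0, 0],
    ![if l = 1 then μ else 0, 0, 0]]

lemma pder_gMat {μ : ℝ} (hμ : μ ≠ 0) (ε : ℝ) (l i j : Fin 3) (p : Pt) :
    pder l (fun q => gMat μ ε q i j) p = gMatPartial μ ε l p i j := by
  have hx₂ : HasDerivAt (μ * ·) μ (p 1) := ((hasDerivAt_id' _).const_mul μ).congr_deriv (mul_one μ)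
  fin_cases i <;> fin_cases j
  all_goals first
    | exact pder_comp_apply (hasDerivAt_div_mul_exp_sub_one hμ ε (p 2))
    | exact pder_comp_apply hx₂
    | simp [pder, gMat, gMatPartial]

lemma inv_gMat (μ ε : ℝ) (p : Pt) :
    (gMat μ ε p)⁻¹ =
      !![0, 1, 0;
        1, (μ * p 1)^2 - (ε/μ) * (exp (-(2*μ*p 2)) - 1), -(μ * p 1);
        0, -(μ * p 1), 1] := by
  refine Matrix.inv_eq_right_inv ?_
  rw [Matrix.eta_fin_three (gMat μ ε p), Matrix.mul_fin_three, Matrix.one_fin_three]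
  simp [gMat]
  ring

theorem christoffel_symbols_general (μ ε : ℝ) (hμ : μ ≠ 0) :
    ∀ (p : Pt) (k i j : Fin 3), Γ μ ε k i j p = Γexp μ ε p k i j := by
  intro p k i j
  simp only [Γ, pder_gMat hμ, inv_gMat, Fin.sum_univ_three]
  fin_cases k <;> fin_cases i <;> fin_cases j <;> simp [gMatPartial, Γexp] <;> field_simp <;> ring

/-- The Christoffel symbols of `g` are exactly the listed ones. -/
theorem christoffel_symbols (μ ε : ℝ) (hμ : μ ≠ 0) (hε : ε = 1 ∨ ε = -1) :
    ∀ (p : Pt) (k i j : Fin 3), Γ μ ε k i j p = Γexp μ ε p k i j :=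
  christoffel_symbols_general μ ε hμ
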